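/- Let E be a lattice effect algebra with natural implication x→y := y+(x∨y)'. Then the identity y'→((x→y)→y)' = x→y holds for all x,y ∈ E. -/
import Mathlib


/-- An effect algebra `(E,+,',0,1)`.  The partial addition is encoded by a total
function `add` together with a definedness predicate `D`; the axioms only
constrain `add` on defined pairs. -/
structure EffectAlgebra (E : Type*) where
  /-- definedness predicate for the partial addition -/
  D : E → E → Prop
  /-- the (partial) addition -/
  add : E → E → E
  /-- the complementation `x ↦ x'` -/
  compl : E → E
  zero : E
  one : E
  /-- (E1) -/
  comm_def : ∀ {a b : E}, D a b → D b a
  comm : ∀ {a b : E}, D a b → add a b = add b a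
  /-- (E2): `(a+b)+c` is defined iff `a+(b+c)` is defined -/
  assoc_def : ∀ a b c : E, (D a b ∧ D (add a b) c) ↔ (D b c ∧ D a (add b c))
  assoc : ∀ a b c : E, D a b → D (add a b) c → add (add a b) c = add a (add b c)
  /-- (E3): `a + b` is defined and equals `1` iff `b = a'` -/
  orth : ∀ a b : E, (D a b ∧ add a b = one) ↔ b = compl a
  /-- (E4) -/
  one_add : ∀ a : E, D one a → a = zero

/-- The induced order of an effect algebra: `a ≤ b` iff `a + c = b` for some `c`. -/
def EffectAlgebra.le {E : Type*} (A : EffectAlgebra E) (a b : E) : Prop :=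
  ∃ c, A.D a c ∧ A.add a c = b

/-- A lattice effect algebra: an effect algebra whose induced order is a lattice. -/
structure LatticeEffectAlgebra (E : Type*) extends EffectAlgebra E where
  sup : E → E → E
  inf : E → E → E
  le_sup_left : ∀ a b : E, toEffectAlgebra.le a (sup a b)
  le_sup_right : ∀ a b : E, toEffectAlgebra.le b (sup a b)
  sup_le : ∀ a b c : E, toEffectAlgebra.le a c → toEffectAlgebra.le b c →
    toEffectAlgebra.le (sup a b) c
  inf_le_left : ∀ a b : E, toEffectAlgebra.le (inf a b) a
  inf_le_right : ∀ a b : E, toEffectAlgebra.le (inf a b) b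
  le_inf : ∀ a b c : E, toEffectAlgebra.le c a → toEffectAlgebra.le c b →
    toEffectAlgebra.le c (inf a b)

/-- The natural implication `x → y := y + (x ∨ y)'` of a lattice effect algebra.
(The sum is always defined since `(x ∨ y)' ≤ y'`.) -/
def LatticeEffectAlgebra.imp {E : Type*} (L : LatticeEffectAlgebra E) (x y : E) : E :=
  L.add y (L.compl (L.sup x y))

namespace EffectAlgebra

variable {E : Type*} (A : EffectAlgebra E)

lemma D_compl (a : E) : A.D a (A.compl a) := ((A.orth a _).mpr rfl).1

lemma add_compl (a : E) : A.add a (A.compl a) = A.one := ((A.orth a _).mpr rfl).2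

lemma compl_compl (a : E) : A.compl (A.compl a) = a := by
  have h := (A.orth (A.compl a) a).mp
    ⟨A.comm_def (A.D_compl a), (A.comm (A.D_compl a)).symm.trans (A.add_compl a)⟩
  exact h.symm

lemma compl_one : A.compl A.one = A.zero :=
  A.one_add _ (A.D_compl A.one)

lemma D_one_zero : A.D A.one A.zero := A.compl_one ▸ A.D_compl A.one

lemma add_one_zero : A.add A.one A.zero = A.one := A.compl_one ▸ A.add_compl A.one

lemma D_zero (a : E) : A.D a A.zero ∧ A.add a A.zero = a := by
  have h1 : A.D (A.add (A.compl a) (A.compl (A.compl a))) A.zero := by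
    rw [A.add_compl]; exact A.D_one_zero
  have h2 := (A.assoc_def (A.compl a) (A.compl (A.compl a)) A.zero).mp
    ⟨A.D_compl _, h1⟩
  have h3 := A.assoc (A.compl a) (A.compl (A.compl a)) A.zero (A.D_compl _) h1
  rw [A.add_compl, A.add_one_zero] at h3
  have h4 : A.add (A.compl (A.compl a)) A.zero = A.compl (A.compl a) :=
    (A.orth (A.compl a) _).mp ⟨h2.2, h3.symm⟩
  rw [A.compl_compl] at h2 h4
  exact ⟨h2.1, h4⟩

lemma cancel {a b c : E} (hb : A.D a b) (hc : A.D a c)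
    (h : A.add a b = A.add a c) : b = c := by
  set e := A.compl (A.add a b) with he
  have hDb : A.D (A.add b a) e := by rw [← A.comm hb]; exact A.D_compl _
  have h1 := (A.assoc_def b a e).mp ⟨A.comm_def hb, hDb⟩
  have h2 : A.add b (A.add a e) = A.one := by
    rw [← A.assoc b a e (A.comm_def hb) hDb, ← A.comm hb, A.add_compl]
  have hb' : A.add a e = A.compl b := (A.orth b _).mp ⟨h1.2, h2⟩
  have hDc : A.D (A.add c a) e := by rw [← A.comm hc, ← h]; exact A.D_compl _
  have h1c := (A.assoc_def c a e).mp ⟨A.comm_def hc, hDc⟩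
  have h2c : A.add c (A.add a e) = A.one := by
    rw [← A.assoc c a e (A.comm_def hc) hDc, ← A.comm hc, ← h, A.add_compl]
  have hc' : A.add a e = A.compl c := (A.orth c _).mp ⟨h1c.2, h2c⟩
  have : A.compl b = A.compl c := hb' ▸ hc'
  calc b = A.compl (A.compl b) := (A.compl_compl b).symm
    _ = A.compl (A.compl c) := by rw [this]
    _ = c := A.compl_compl c

lemma eq_zero_of_add_eq_zero {c d : E} (hcd : A.D c d)
    (h : A.add c d = A.zero) : c = A.zero := by
  have hD1 : A.D (A.add c d) A.one := by rw [h]; exact A.comm_def A.D_one_zero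
  have h2 := (A.assoc_def c d A.one).mp ⟨hcd, hD1⟩
  have hd0 : d = A.zero := A.one_add d (A.comm_def h2.1)
  rw [hd0] at h
  rw [← h, (A.D_zero c).2]

lemma le_refl (a : E) : A.le a a := ⟨A.zero, (A.D_zero a).1, (A.D_zero a).2⟩

lemma le_antisymm {a b : E} (hab : A.le a b) (hba : A.le b a) : a = b := by
  obtain ⟨c, hc, hc2⟩ := hab
  obtain ⟨d, hd, hd2⟩ := hba
  have hDacd : A.D (A.add a c) d := hc2 ▸ hd
  have h1 := (A.assoc_def a c d).mp ⟨hc, hDacd⟩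
  have h2 : A.add a (A.add c d) = a := by
    rw [← A.assoc a c d hc hDacd, hc2, hd2]
  have h3 : A.add c d = A.zero := by
    apply A.cancel h1.2 (A.D_zero a).1
    rw [h2, (A.D_zero a).2]
  have hc0 : c = A.zero := A.eq_zero_of_add_eq_zero h1.1 h3
  rw [← hc2, hc0, (A.D_zero a).2]

lemma D_of_le {a b c : E} (hab : A.D a b) (hcb : A.le c b) : A.D a c := by
  obtain ⟨d, hd, hd2⟩ := hcb
  have : A.D a (A.add c d) := hd2.symm ▸ hab
  exact ((A.assoc_def a c d).mpr ⟨hd, this⟩).1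

lemma compl_antitone {a b : E} (h : A.le a b) : A.le (A.compl b) (A.compl a) := by
  obtain ⟨c, hc, hc2⟩ := h
  have hD : A.D (A.add a c) (A.compl b) := hc2 ▸ A.D_compl b
  have h1 := (A.assoc_def a c (A.compl b)).mp ⟨hc, hD⟩
  have h2 : A.add a (A.add c (A.compl b)) = A.one := by
    rw [← A.assoc a c _ hc hD, hc2, A.add_compl]
  have h3 : A.add c (A.compl b) = A.compl a := (A.orth a _).mp ⟨h1.2, h2⟩
  exact ⟨c, A.comm_def h1.1, (A.comm (A.comm_def h1.1)).trans h3⟩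

end EffectAlgebra

namespace LatticeEffectAlgebra

variable {E : Type*} (L : LatticeEffectAlgebra E)

lemma sup_eq_left {a b : E} (h : L.toEffectAlgebra.le b a) : L.sup a b = a :=
  L.toEffectAlgebra.le_antisymm
    (L.sup_le a b a (L.toEffectAlgebra.le_refl a) h) (L.le_sup_left a b)

end LatticeEffectAlgebra

theorem compl_imp_compl_identity' {E : Type*} (L : LatticeEffectAlgebra E) (x y : E) :
    L.imp (L.compl y) (L.compl (L.imp (L.imp x y) y)) = L.imp x y := by
  set A := L.toEffectAlgebra with hA
  set a := L.sup x y with ha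
  have hy_le_a : A.le y a := L.le_sup_right x y
  have hDya' : A.D y (A.compl a) :=
    A.comm_def (A.D_of_le (A.comm_def (A.D_compl a)) hy_le_a)
  set u := A.add y (A.compl a) with hu
  have himpxy : L.imp x y = u := rfl
  have hy_le_u : A.le y u := ⟨A.compl a, hDya', rfl⟩
  have hsup_uy : L.sup u y = u := L.sup_eq_left hy_le_u
  -- (x→y)→y = y + u'
  have himp2 : L.imp (L.imp x y) y = A.add y (A.compl u) := by
    show A.add y (A.compl (L.sup (L.imp x y) y)) = _
    rw [himpxy, hsup_uy]
  -- key claim: y + u' = a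
  have hDuu' : A.D u (A.compl u) := A.D_compl u
  have h5 := (A.assoc_def y (A.compl a) (A.compl u)).mp ⟨hDya', hDuu'⟩
  have h6 : A.add y (A.add (A.compl a) (A.compl u)) = A.one := by
    rw [← A.assoc y (A.compl a) (A.compl u) hDya' hDuu', ← hu, A.add_compl]
  -- D y u'
  have hu'_le : A.le (A.compl u) (A.add (A.compl a) (A.compl u)) :=
    ⟨A.compl a, A.comm_def h5.1, A.comm (A.comm_def h5.1)⟩
  have hDyu' : A.D y (A.compl u) := A.D_of_le h5.2 hu'_le
  -- D (y+u') a'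
  have h7 := (A.assoc_def y (A.compl u) (A.compl a)).mpr
    ⟨A.comm_def h5.1, by rw [A.comm (A.comm_def h5.1)]; exact h5.2⟩
  have h8 : A.add (A.add y (A.compl u)) (A.compl a) = A.one := by
    rw [A.assoc y (A.compl u) (A.compl a) hDyu' h7.2,
      A.comm (A.comm_def h5.1), h6]
  have h9 : A.compl a = A.compl (A.add y (A.compl u)) :=
    (A.orth (A.add y (A.compl u)) (A.compl a)).mp ⟨h7.2, h8⟩
  have hkey : A.add y (A.compl u) = a := by
    have := congrArg A.compl h9
    rw [A.compl_compl, A.compl_compl] at this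
    exact this.symm
  -- now compute LHS
  have ha'_le_y' : A.le (A.compl a) (A.compl y) := A.compl_antitone hy_le_a
  have hsup : L.sup (A.compl y) (A.compl a) = A.compl y := L.sup_eq_left ha'_le_y'
  show A.add (A.compl (L.imp (L.imp x y) y))
      (A.compl (L.sup (A.compl y) (A.compl (L.imp (L.imp x y) y)))) = L.imp x y
  rw [himp2, hkey, hsup, A.compl_compl, himpxy, hu]
  exact A.comm (A.comm_def hDya')


/-- Theorem 2.2 (viii): `y' → ((x → y) → y)' = x → y`. -/
theorem compl_imp_compl_identity {E : Type*} (L : LatticeEffectAlgebra E) (x y : E) :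
    L.imp (L.compl y) (L.compl (L.imp (L.imp x y) y)) = L.imp x y := by
  exact compl_imp_compl_identity' L x y
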